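/- arXiv:2402.03868 — 6 statements merged into one kernel-verified Lean document; each statement's English description precedes it below -/
import Mathlib

section
/- Let M be an irreducible D_s-module and let s divide t. Then M, viewed as a D_t-module by restriction, is a semisimple D_t-module (it is a sum of the irreducible D_t-modules Φ^{is}(P) for any irreducible D_t-submodule P of M). -/
/-- A subspace `p` is stable under the (semilinear) action `g`; for
finite-dimensional difference modules this characterizes difference submodules. -/
def DiffStab {F V : Type*} [Field F] [AddCommGroup V] [Module F V]
    (g : V → V) (p : Submodule F V) : Prop :=
  ∀ x ∈ p, g x ∈ p

/-!
The `A^k`-stable subspaces form a complete sublattice of the subspace lattice; it is modular and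
of finite length, so it is complemented as soon as its atoms (the irreducible `D_t`-submodules)
have supremum `⊤`. Since `A` commutes with `A^k`, transport by `A` is an automorphism of this
lattice, so it fixes the supremum of all atoms. That supremum is therefore `A`-stable, hence `⊥`
or `⊤` by irreducibility, and in an atomic lattice it is `⊥` only when `⊤ = ⊥`.
-/

section Order

variable {α β : Type*}

def OrderIso.subtypeEquiv [LE α] [LE β] {P : α → Prop} {Q : β → Prop} (e : α ≃o β)
    (he : ∀ a, P a ↔ Q (e a)) : Subtype P ≃o Subtype Q where
  toEquiv := e.toEquiv.subtypeEquiv he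
  map_rel_iff' := e.le_iff_le

variable [CompleteLattice α]

theorem OrderIso.apply_sSup_setOf_isAtom (e : α ≃o α) :
    e (sSup {a | IsAtom a}) = sSup {a | IsAtom a} := by
  rw [e.map_sSup, ← sSup_image, e.image_eq_preimage_symm]
  congr 1
  ext a
  exact e.symm.isAtom_iff a

theorem sSup_setOf_isAtom_eq_bot_iff [IsAtomic α] :
    sSup {a : α | IsAtom a} = ⊥ ↔ (⊤ : α) = ⊥ := by
  refine ⟨fun h => (eq_bot_or_exists_atom_le ⊤).resolve_right ?_, fun h => ?_⟩
  · rintro ⟨a, ha, -⟩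
    exact ha.1 (le_bot_iff.mp (h ▸ le_sSup ha))
  · exact le_bot_iff.mp (h ▸ le_top)

end Order

section Stable

variable {F V : Type*} [Field F] [AddCommGroup V] [Module F V]

theorem diffStab_sSup {g : AddMonoid.End V} {s : Set (Submodule F V)}
    (hs : ∀ p ∈ s, DiffStab g p) : DiffStab g (sSup s) := by
  have h : (sSup s).toAddSubmonoid ≤ (sSup s).toAddSubmonoid.comap g := by
    rw [Submodule.toAddSubmonoid_sSup]
    refine sSup_le ?_
    rintro _ ⟨p, hp, rfl⟩ x hx
    exact AddSubmonoid.mem_sSup_of_mem (Set.mem_image_of_mem _ hp) (hs p hp x hx)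
  exact fun x hx => h hx

theorem diffStab_sInf {g : V → V} {s : Set (Submodule F V)} (hs : ∀ p ∈ s, DiffStab g p) :
    DiffStab g (sInf s) := fun x hx =>
  Submodule.mem_sInf.mpr fun p hp => hs p hp x (Submodule.mem_sInf.mp hx p hp)

variable (F) in
def stableSubmodules (g : AddMonoid.End V) : CompleteSublattice (Submodule F V) :=
  CompleteSublattice.mk' {p | DiffStab g p} (fun _ hs => diffStab_sSup hs)
    (fun _ hs => diffStab_sInf hs)

theorem mem_stableSubmodules {g : AddMonoid.End V} {p : Submodule F V} :
    p ∈ stableSubmodules F g ↔ DiffStab g p :=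
  Iff.rfl

instance (g : AddMonoid.End V) : IsModularLattice (stableSubmodules F g) :=
  ⟨fun {_} y {_} h => IsModularLattice.sup_inf_le_assoc_of_le (α := Submodule F V) y h⟩

theorem diffStab_map_iff {σ σ' : F →+* F} [RingHomInvPair σ σ'] [RingHomInvPair σ' σ]
    (e : V ≃ₛₗ[σ] V) {g : V → V} (hge : Function.Commute e g) (p : Submodule F V) :
    DiffStab g (p.map (e : V →ₛₗ[σ] V)) ↔ DiffStab g p := by
  refine ⟨fun h x hx => ?_, ?_⟩
  · obtain ⟨y, hy, hyx⟩ := h (e x) (Submodule.mem_map_of_mem hx)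
    rwa [← e.injective (hyx.trans (hge x).symm)]
  · rintro h _ ⟨x, hx, rfl⟩
    exact (hge x).symm ▸ Submodule.mem_map_of_mem (h x hx)

theorem complementedLattice_stableSubmodules [FiniteDimensional F V] {σ σ' : F →+* F}
    [RingHomInvPair σ σ'] [RingHomInvPair σ' σ] (e : V ≃ₛₗ[σ] V) (g : AddMonoid.End V)
    (hge : Function.Commute e g) (hirr : ∀ p : Submodule F V, DiffStab e p → p = ⊥ ∨ p = ⊤) :
    ComplementedLattice (stableSubmodules F g) := by
  have := CompleteLattice.isCompactlyGenerated_of_wellFoundedGT (α := stableSubmodules F g)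
  let eL : stableSubmodules F g ≃o stableSubmodules F g :=
    (Submodule.orderIsoMapComap e).subtypeEquiv fun p => (diffStab_map_iff e hge p).symm
  set T := sSup {a : stableSubmodules F g | IsAtom a}
  have hT : DiffStab (F := F) e T := by
    intro x hx
    rw [← congrArg (β := Submodule F V) Subtype.val eL.apply_sSup_setOf_isAtom]
    exact Submodule.mem_map_of_mem hx
  apply complementedLattice_of_sSup_atoms_eq_top
  rcases hirr _ hT with h | h
  · have hbot : T = ⊥ := Subtype.ext h
    exact hbot.trans (sSup_setOf_isAtom_eq_bot_iff.mp hbot).symm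
  · exact Subtype.ext h

end Stable

theorem restriction_of_irreducible_semisimple_general {F V : Type*} [Field F]
    [AddCommGroup V] [Module F V] [FiniteDimensional F V]
    (ψ : F ≃+* F) (A : V ≃+ V)
    (hA : ∀ (f : F) (v : V), A (f • v) = ψ f • A v)
    (hirr : ∀ p : Submodule F V, DiffStab ⇑A p → p = ⊥ ∨ p = ⊤)
    (k : ℕ) :
    ∀ p : Submodule F V, DiffStab ((⇑A)^[k]) p →
      ∃ q : Submodule F V, DiffStab ((⇑A)^[k]) q ∧ IsCompl p q := by
  have := RingHomInvPair.of_ringEquiv ψ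
  have := RingHomInvPair.of_ringEquiv_symm ψ
  let e : V ≃ₛₗ[(ψ : F →+* F)] V := { A with map_smul' := hA }
  let a : AddMonoid.End V := A.toAddMonoidHom
  have hak : ⇑(a ^ k) = (⇑A)^[k] := AddMonoid.End.coe_pow _ _ _
  have hcomm : Function.Commute e ⇑(a ^ k) := hak ▸ Function.Commute.self_iterate A k
  have := complementedLattice_stableSubmodules e (a ^ k) hcomm hirr
  rw [CompleteSublattice.isComplemented_iff] at this
  simpa only [mem_stableSubmodules, hak] using this

/-- Restriction of an irreducible module is semisimple: let `(V, A)` be a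
finite-dimensional difference module over `D_s` (where `ψ = φ^s` and `A` is the
`ψ`-semilinear action of `Φ^s`) which is irreducible.  Then for any `k = t/s > 0`,
the restriction `(V, A^k)` to `D_t` is a semisimple `D_t`-module: every
`D_t`-submodule of `V` has a `D_t`-stable complement (equivalently, `V` is a sum
of irreducible `D_t`-submodules, namely the translates `Φ^{is}(P)` of any
irreducible `D_t`-submodule `P`). -/
theorem restriction_of_irreducible_semisimple {F V : Type*} [Field F]
    [AddCommGroup V] [Module F V] [FiniteDimensional F V]
    (ψ : F ≃+* F) (A : V ≃+ V)
    (hA : ∀ (f : F) (v : V), A (f • v) = ψ f • A v)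
    (hnt : Nontrivial V)
    (hirr : ∀ p : Submodule F V, DiffStab ⇑A p → p = ⊥ ∨ p = ⊤)
    (k : ℕ) (hk : 0 < k) :
    ∀ p : Submodule F V, DiffStab ((⇑A)^[k]) p →
      ∃ q : Submodule F V, DiffStab ((⇑A)^[k]) q ∧ IsCompl p q :=
  restriction_of_irreducible_semisimple_general ψ A hA hirr k
end

section
/- (Clifford-type theorem for difference modules) Let M be an irreducible D_s-module whose restriction to D_t (for s | t) decomposes into isotypic components M↓^s_t = M_1^{n_1} ⊕ ⋯ ⊕ M_r^{n_r} with the M_i pairwise non-isomorphic irreducible D_t-modules. Then multiplication by Φ^s permutes the isotypic components M_i^{n_i} transitively; consequently n_1 = ⋯ = n_r and dim_F M_1 = ⋯ = dim_F M_r. -/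
/-- `p` is an irreducible difference submodule for the action `g`. -/
def DiffIrred {F V : Type*} [Field F] [AddCommGroup V] [Module F V]
    (g : V → V) (p : Submodule F V) : Prop :=
  p ≠ ⊥ ∧ ∀ q ≤ p, DiffStab g q → q = ⊥ ∨ q = p

/-- Two difference submodules `p`, `q` (for the action `g`) are isomorphic:
there is an `F`-linear equivalence `p ≃ q` commuting with `g`. -/
def DiffIso {F V : Type*} [Field F] [AddCommGroup V] [Module F V]
    (g : V → V) (p q : Submodule F V) : Prop :=
  ∃ e : p ≃ₗ[F] q, ∀ (x : V) (hx : x ∈ p) (hgx : g x ∈ p),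
    ((e ⟨g x, hgx⟩ : q) : V) = g ((e ⟨x, hx⟩ : q) : V)


/-!
Let `g = A^[k]`. Projecting an irreducible `g`-stable subspace `U` onto the irreducible summands
`W i a` gives maps commuting with `g`, so by Schur's argument each projection is zero or an
isomorphism; as summands of different components are not isomorphic, `U` lies in one component
and is isomorphic to its summands. The semilinear map `A` commutes with `g`, so it carries
irreducible `g`-submodules and their isomorphisms to the same kind of objects; hence it maps each
component into one component, and doing the same for `A⁻¹` shows that `A` permutes the components.
The sum of the components in an `A`-orbit is `A`-stable, hence all of `V`, so the permutation is
transitive. Since `A` preserves dimensions, the multiplicity and the dimension of the summands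
are constant along orbits.
-/

open Module Function

theorem iSupIndep.mem_of_le_biSup {α ι : Type*} [CompleteLattice α] {t : ι → α}
    (ht : iSupIndep t) {j : ι} (hj : t j ≠ ⊥) {s : Set ι} (h : t j ≤ ⨆ i ∈ s, t i) : j ∈ s := by
  by_contra hjs
  exact hj ((ht.disjoint_biSup hjs).eq_bot_of_le h)

theorem iSupIndep.eq_of_le_of_le {α ι : Type*} [CompleteLattice α] {t : ι → α}
    (ht : iSupIndep t) {x : α} (hx : x ≠ ⊥) {i j : ι} (hi : x ≤ t i) (hj : x ≤ t j) : i = j := by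
  by_contra hij
  exact hx (le_bot_iff.mp (ht.pairwiseDisjoint hij hi hj))

theorem iSupIndep.sigma {α ι : Type*} {κ : ι → Type*} [CompleteLattice α] [IsModularLattice α]
    [Fintype ι] [∀ i, Fintype (κ i)] {Q : ι → α} {W : ∀ i, κ i → α}
    (hQ : iSupIndep Q) (hW : ∀ i, iSupIndep (W i)) (hWQ : ∀ i, ⨆ a, W i a = Q i) :
    iSupIndep fun x : Σ i, κ i => W x.1 x.2 := by
  simp only [iSupIndep_iff_supIndep_univ, ← Finset.univ_sigma_univ] at *
  refine Finset.SupIndep.sigma ?_ fun i _ => hW i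
  simpa only [Finset.sup_univ_eq_iSup, hWQ] using hQ

section Finrank

variable {F V : Type*} [Field F] [AddCommGroup V] [Module F V]

theorem iSupIndep.finrank_iSup [FiniteDimensional F V] {ι : Type*} [Fintype ι]
    {P : ι → Submodule F V} (h : iSupIndep P) :
    finrank F ↥(⨆ i, P i) = ∑ i, finrank F (P i) := by
  classical
  suffices ∀ s : Finset ι, finrank F ↥(⨆ i ∈ s, P i) = ∑ i ∈ s, finrank F (P i) by
    rw [show ⨆ i, P i = ⨆ i ∈ Finset.univ, P i by simp]
    exact this Finset.univ
  intro s
  induction s using Finset.induction_on with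
  | empty => simp
  | insert a s ha ih =>
    have hdisj : P a ⊓ ⨆ i ∈ s, P i = ⊥ := by
      simpa using (h.disjoint_biSup (y := (s : Set ι)) (by simpa using ha)).eq_bot
    rw [Finset.sum_insert ha, ← ih, Finset.iSup_insert,
      ← Submodule.finrank_sup_add_finrank_inf_eq, hdisj, finrank_bot, add_zero]

theorem Submodule.finrank_map_semilinearEquiv {σ σ' : F →+* F} [RingHomInvPair σ σ']
    [RingHomInvPair σ' σ] (e : V ≃ₛₗ[σ] V) (p : Submodule F V) :
    finrank F (p.map e.toLinearMap) = finrank F p := by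
  have hσ : Bijective σ := bijective_iff_has_inverse.mpr
    ⟨σ', fun _ => RingHomInvPair.comp_apply_eq, fun _ => RingHomInvPair.comp_apply_eq₂⟩
  unfold finrank
  rw [rank_eq_of_equiv_equiv σ (e.submoduleMap p).toAddEquiv hσ
    fun c x => (e.submoduleMap p).map_smulₛₗ c x]

end Finrank

section DiffIso

variable {F V : Type*} [Field F] [AddCommGroup V] [Module F V] {g : V → V}

theorem DiffIso.symm {p q : Submodule F V} (hp : DiffStab g p) (h : DiffIso g p q) :
    DiffIso g q p := by
  obtain ⟨e, he⟩ := h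
  refine ⟨e.symm, fun y hy hgy => ?_⟩
  set x := e.symm ⟨y, hy⟩
  have hx : e ⟨g x, hp _ x.2⟩ = ⟨g y, hgy⟩ := by
    ext
    rw [he x x.2, show (⟨x, x.2⟩ : p) = x from rfl, LinearEquiv.apply_symm_apply]
  rw [← hx, LinearEquiv.symm_apply_apply]

theorem DiffIso.trans {p q s : Submodule F V} (h₁ : DiffIso g p q) (h₂ : DiffIso g q s) :
    DiffIso g p s := by
  obtain ⟨e₁, he₁⟩ := h₁
  obtain ⟨e₂, he₂⟩ := h₂
  refine ⟨e₁.trans e₂, fun x hx hgx => ?_⟩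
  set y := e₁ ⟨x, hx⟩
  have hgy : g y ∈ q := he₁ x hx hgx ▸ (e₁ ⟨g x, hgx⟩).2
  have hy : e₁ ⟨g x, hgx⟩ = ⟨g y, hgy⟩ := Subtype.ext (he₁ x hx hgx)
  simp only [LinearEquiv.trans_apply, hy]
  exact he₂ y y.2 hgy

theorem DiffIso.finrank_eq {p q : Submodule F V} (h : DiffIso g p q) :
    finrank F p = finrank F q :=
  h.choose.finrank_eq

variable {σ : F →+* F}

theorem DiffStab.map [RingHomSurjective σ] {p : Submodule F V} (hp : DiffStab g p)
    (f : V →ₛₗ[σ] V) (hf : ∀ x, f (g x) = g (f x)) : DiffStab g (p.map f) := by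
  rintro _ ⟨x, hx, rfl⟩
  exact ⟨g x, hp x hx, hf x⟩

theorem DiffStab.comap {q : Submodule F V} (hq : DiffStab g q) (f : V →ₛₗ[σ] V)
    (hf : ∀ x, f (g x) = g (f x)) : DiffStab g (q.comap f) := fun x hx => by
  simpa [Submodule.mem_comap, hf] using hq _ hx

variable {σ' : F →+* F} [RingHomInvPair σ σ'] [RingHomInvPair σ' σ] {e : V ≃ₛₗ[σ] V}

theorem DiffIrred.map_equiv (he : ∀ x, e (g x) = g (e x)) {p : Submodule F V}
    (hp : DiffIrred g p) : DiffIrred g (p.map e.toLinearMap) := by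
  refine ⟨fun h => hp.1 ?_, fun q hq hqs => ?_⟩
  · rw [← Submodule.comap_map_eq_of_injective e.injective p, h, Submodule.comap_bot,
      LinearEquiv.ker]
  · have hle : q.comap e.toLinearMap ≤ p :=
      Submodule.comap_map_eq_of_injective e.injective p ▸ Submodule.comap_mono hq
    rw [← Submodule.map_comap_eq_of_surjective e.surjective q]
    rcases hp.2 _ hle (hqs.comap e.toLinearMap he) with h | h <;> simp [h]

theorem DiffIso.map_equiv (he : ∀ x, e (g x) = g (e x)) {p q : Submodule F V}
    (h : DiffIso g p q) : DiffIso g (p.map e.toLinearMap) (q.map e.toLinearMap) := by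
  obtain ⟨e₀, he₀⟩ := h
  refine ⟨((e.submoduleMap p).symm.trans e₀).trans (e.submoduleMap q), fun x hx hgx => ?_⟩
  obtain ⟨y, hy, rfl⟩ := hx
  simp only [LinearEquiv.coe_coe] at hgx ⊢
  have hgy : g y ∈ p := by simpa [Submodule.mem_map_equiv, ← he] using hgx
  have hsymm : ∀ z (hz : z ∈ p) w (hw : w ∈ p.map e.toLinearMap), w = e z →
      (e.submoduleMap p).symm ⟨w, hw⟩ = ⟨z, hz⟩ := fun z hz w hw hwz =>
    (LinearEquiv.symm_apply_eq _).mpr (Subtype.ext (by simp [hwz]))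
  simp only [LinearEquiv.trans_apply, hsymm y hy, hsymm (g y) hgy _ _ (he y).symm,
    LinearEquiv.submoduleMap_apply, he₀ y hy hgy, he]

end DiffIso

theorem DiffIso.of_map_ne_bot {F V : Type*} [Field F] [AddCommGroup V] [Module F V] {g : V →+ V}
    {U P : Submodule F V} (hU : DiffStab g U) (hUirr : DiffIrred g U) (hPirr : DiffIrred g P)
    (f : V →ₗ[F] V) (hf : ∀ x, f (g x) = g (f x)) (hfP : U.map f ≤ P) (hne : U.map f ≠ ⊥) :
    DiffIso g U P := by
  have himage : U.map f = P := (hPirr.2 _ hfP (hU.map f hf)).resolve_left hne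
  have hker : U ⊓ LinearMap.ker f = ⊥ := by
    refine (hUirr.2 _ inf_le_left fun x hx => ⟨hU x hx.1, ?_⟩).resolve_right fun h => hne ?_
    · simp [LinearMap.mem_ker.mp hx.2, hf]
    · exact LinearMap.le_ker_iff_map.mp (inf_eq_left.mp h)
  let φ : U →ₗ[F] P := f.restrict fun x hx => hfP ⟨x, hx, rfl⟩
  have hinj : Injective φ := by
    refine (injective_iff_map_eq_zero φ).mpr fun x hx => Subtype.ext ?_
    have hx' : (x : V) ∈ U ⊓ LinearMap.ker f := ⟨x.2, congrArg Subtype.val hx⟩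
    simpa [hker] using hx'
  have hsurj : Surjective φ := by
    rintro ⟨y, hy⟩
    obtain ⟨x, hx, rfl⟩ := himage.symm ▸ hy
    exact ⟨⟨x, hx⟩, rfl⟩
  exact ⟨.ofBijective φ ⟨hinj, hsurj⟩, fun x _ _ => hf x⟩

section Projection

variable {R M ι : Type*} [Ring R] [AddCommGroup M] [Module R M] {P : ι → Submodule R M}

theorem iSupIndep.isCompl_iSup_ne (hind : iSupIndep P) (htop : iSup P = ⊤) (i : ι) :
    IsCompl (P i) (⨆ j ≠ i, P j) :=
  ⟨hind i, codisjoint_iff.mpr (by rw [← iSup_split_single, htop])⟩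

noncomputable def iSupIndep.proj (hind : iSupIndep P) (htop : iSup P = ⊤) (i : ι) :
    M →ₗ[R] M :=
  (P i).projection _ (hind.isCompl_iSup_ne htop i)

variable (hind : iSupIndep P) (htop : iSup P = ⊤)
include hind htop

theorem iSupIndep.proj_mem (i : ι) (x : M) : hind.proj htop i x ∈ P i :=
  Submodule.projection_apply_mem _ x

theorem iSupIndep.proj_apply_of_mem {i : ι} {x : M} (hx : x ∈ P i) : hind.proj htop i x = x :=
  Submodule.projection_apply_of_mem_left _ hx

theorem iSupIndep.proj_apply_of_mem_ne {i j : ι} (hij : j ≠ i) {x : M} (hx : x ∈ P j) :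
    hind.proj htop i x = 0 :=
  (Submodule.projection_apply_eq_zero_iff _).mpr
    (Submodule.mem_iSup_of_mem j (Submodule.mem_iSup_of_mem hij hx))

theorem iSupIndep.sum_proj [Fintype ι] (x : M) : ∑ i, hind.proj htop i x = x := by
  have hx : x ∈ iSup P := htop ▸ Submodule.mem_top
  induction hx using Submodule.iSup_induction' with
  | mem j x hx =>
    rw [Finset.sum_eq_single j (fun i _ hij => hind.proj_apply_of_mem_ne htop (Ne.symm hij) hx)
      (by simp), hind.proj_apply_of_mem htop hx]
  | zero => simp
  | add x y _ _ hx hy => simp [Finset.sum_add_distrib, hx, hy]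

end Projection

section Semisimple

variable {F V ι : Type*} [Field F] [AddCommGroup V] [Module F V] [Fintype ι] {g : V →+ V}
  {P : ι → Submodule F V} (hind : iSupIndep P) (htop : iSup P = ⊤)
include hind htop

theorem iSupIndep.proj_comm (hstab : ∀ i, DiffStab g (P i)) (i : ι) (x : V) :
    hind.proj htop i (g x) = g (hind.proj htop i x) := by
  conv_lhs => rw [← hind.sum_proj htop x, map_sum, map_sum]
  refine (Finset.sum_eq_single i (fun j _ hji => ?_) (by simp)).trans ?_
  · exact hind.proj_apply_of_mem_ne htop hji (hstab j _ (hind.proj_mem htop j x))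
  · exact hind.proj_apply_of_mem htop (hstab i _ (hind.proj_mem htop i x))

theorem iSupIndep.le_iSup_diffIso (hstab : ∀ i, DiffStab g (P i)) (hirr : ∀ i, DiffIrred g (P i))
    {U : Submodule F V} (hU : DiffStab g U) (hUirr : DiffIrred g U) :
    U ≤ ⨆ (i) (_ : DiffIso g U (P i)), P i := by
  intro x hx
  rw [← hind.sum_proj htop x]
  refine Submodule.sum_mem _ fun i _ => ?_
  by_cases hiso : DiffIso g U (P i)
  · exact Submodule.mem_iSup_of_mem i (Submodule.mem_iSup_of_mem hiso (hind.proj_mem htop i x))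
  · have hbot : U.map (hind.proj htop i) = ⊥ := by
      by_contra hne
      exact hiso (.of_map_ne_bot hU hUirr (hirr i) _ (hind.proj_comm htop hstab i)
        (Submodule.map_le_iff_le_comap.mpr fun y _ => hind.proj_mem htop i y) hne)
    rw [LinearMap.mem_ker.mp (LinearMap.le_ker_iff_map.mpr hbot hx)]
    exact zero_mem _

end Semisimple

section Orbit

variable {F V ι : Type*} [Field F] [AddCommGroup V] [Module F V]
  {σ σ' : F →+* F} [RingHomInvPair σ σ'] [RingHomInvPair σ' σ] (e : V ≃ₛₗ[σ] V)
  {Q : ι → Submodule F V}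

theorem map_eq_of_map_le_of_map_symm_le (hQ : iSupIndep Q) (hne : ∀ i, Q i ≠ ⊥) {s t : ι → ι}
    (hs : ∀ i, (Q i).map e.toLinearMap ≤ Q (s i))
    (ht : ∀ i, (Q i).map e.symm.toLinearMap ≤ Q (t i)) (i : ι) :
    (Q i).map e.toLinearMap = Q (s i) := by
  have hle : Q i ≤ (Q (s i)).map e.symm.toLinearMap := by
    rw [← Submodule.comap_equiv_eq_map_symm]
    exact Submodule.map_le_iff_le_comap.mp (hs i)
  have hts : i = t (s i) := hQ.eq_of_le_of_le (hne i) le_rfl (hle.trans (ht (s i)))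
  refine (hs i).antisymm ?_
  have := ht (s i)
  rwa [← hts, Submodule.map_le_iff_le_comap, Submodule.comap_equiv_eq_map_symm] at this

theorem image_iterate_eq_of_map_eq {s : ι → ι} (hs : ∀ i, (Q i).map e.toLinearMap = Q (s i))
    (m : ℕ) (i : ι) : (⇑e)^[m] '' (Q i : Set V) = Q (s^[m] i) := by
  have hsemi : Semiconj (fun i => (Q i : Set V)) s (Set.image e) := fun i =>
    (congrArg SetLike.coe (hs i)).symm.trans (Submodule.map_coe _ _)
  rw [Set.image_iterate_eq]
  exact (hsemi.iterate_right m i).symm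

theorem exists_iterate_eq_of_irreducible
    (hirr : ∀ p : Submodule F V, DiffStab e p → p = ⊥ ∨ p = ⊤) (hQ : iSupIndep Q)
    (hne : ∀ i, Q i ≠ ⊥) {s : ι → ι} (hs : ∀ i, (Q i).map e.toLinearMap = Q (s i)) (i j : ι) :
    ∃ m, s^[m] i = j := by
  set T := ⨆ m : ℕ, Q (s^[m] i)
  have hmapT : T.map e.toLinearMap ≤ T := by
    rw [Submodule.map_iSup]
    refine iSup_le fun m => ?_
    rw [hs, ← iterate_succ_apply' s]
    exact le_iSup (fun m => Q (s^[m] i)) (m + 1)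
  have hT : T = ⊤ := by
    refine (hirr T fun x hx => hmapT (Submodule.mem_map_of_mem hx)).resolve_left fun h => ?_
    exact hne i (le_bot_iff.mp (h ▸ le_iSup (fun m => Q (s^[m] i)) 0))
  refine hQ.mem_of_le_biSup (hne j) (s := Set.range fun m => s^[m] i) ?_
  rw [iSup_range]
  exact le_top.trans hT.ge

end Orbit

section Isotypic

variable {F V ι : Type*} {κ : ι → Type*} [Field F] [AddCommGroup V] [Module F V]

/-- `Q i` is the isotypic component `M_i^{n_i}` of `(V, g)`, realised as the independent sum of
the copies `W i a` of `M_i`. -/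
structure IsIsotypicDecomposition (g : V →+ V) (Q : ι → Submodule F V)
    (W : ∀ i, κ i → Submodule F V) : Prop where
  indep : iSupIndep Q
  iSup_eq_top : iSup Q = ⊤
  indep_component : ∀ i, iSupIndep (W i)
  iSup_component : ∀ i, ⨆ a, W i a = Q i
  stab : ∀ i a, DiffStab g (W i a)
  irred : ∀ i a, DiffIrred g (W i a)
  iso : ∀ i a b, DiffIso g (W i a) (W i b)
  not_iso : ∀ i i', i ≠ i' → ∀ a b, ¬ DiffIso g (W i a) (W i' b)

namespace IsIsotypicDecomposition

variable {g : V →+ V} {Q : ι → Submodule F V} {W : ∀ i, κ i → Submodule F V}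
  (hD : IsIsotypicDecomposition g Q W)
include hD

theorem component_le (i : ι) (a : κ i) : W i a ≤ Q i :=
  hD.iSup_component i ▸ le_iSup (W i) a

theorem ne_bot {i : ι} (a : κ i) : Q i ≠ ⊥ :=
  fun h => (hD.irred i a).1 (le_bot_iff.mp (h ▸ hD.component_le i a))

theorem finrank_eq_card_mul [FiniteDimensional F V] (i : ι) [Fintype (κ i)] (a : κ i) :
    finrank F (Q i) = Fintype.card (κ i) * finrank F (W i a) := by
  rw [← hD.iSup_component i, (hD.indep_component i).finrank_iSup]
  simp [fun b => (hD.iso i b a).finrank_eq]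

variable [Fintype ι] [∀ i, Fintype (κ i)]

theorem exists_le_and_diffIso {U : Submodule F V} (hU : DiffStab g U) (hUirr : DiffIrred g U) :
    ∃ i, U ≤ Q i ∧ ∃ a, DiffIso g U (W i a) := by
  have hind : iSupIndep fun x : Σ i, κ i => W x.1 x.2 :=
    hD.indep.sigma hD.indep_component hD.iSup_component
  have htop : ⨆ x : Σ i, κ i, W x.1 x.2 = ⊤ := by
    rw [iSup_sigma]
    simp only [hD.iSup_component, hD.iSup_eq_top]
  have hle := hind.le_iSup_diffIso htop (fun x => hD.stab x.1 x.2) (fun x => hD.irred x.1 x.2)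
    hU hUirr
  obtain ⟨⟨i, a⟩, hiso⟩ : ∃ x : Σ i, κ i, DiffIso g U (W x.1 x.2) := by
    by_contra! h
    exact hUirr.1 (le_bot_iff.mp (by simpa [h] using hle))
  refine ⟨i, hle.trans (iSup₂_le fun x hx => ?_), a, hiso⟩
  obtain rfl : x.1 = i := by_contra fun hne =>
    hD.not_iso i x.1 (Ne.symm hne) a x.2 ((hiso.symm hU).trans hx)
  exact hD.component_le x.1 x.2

variable {σ σ' : F →+* F} [RingHomInvPair σ σ'] [RingHomInvPair σ' σ] {e : V ≃ₛₗ[σ] V}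

theorem exists_map_le_and_diffIso (he : ∀ x, e (g x) = g (e x)) (i : ι) (a : κ i) :
    ∃ i', (W i a).map e.toLinearMap ≤ Q i' ∧
      ∃ c, DiffIso g ((W i a).map e.toLinearMap) (W i' c) :=
  hD.exists_le_and_diffIso ((hD.stab i a).map e.toLinearMap he) ((hD.irred i a).map_equiv he)

theorem exists_map_le (he : ∀ x, e (g x) = g (e x)) {i : ι} (a₀ : κ i) :
    ∃ i', (Q i).map e.toLinearMap ≤ Q i' := by
  obtain ⟨i', -, c, hc⟩ := hD.exists_map_le_and_diffIso he i a₀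
  refine ⟨i', ?_⟩
  rw [← hD.iSup_component i, Submodule.map_iSup]
  refine iSup_le fun a => ?_
  obtain ⟨i'', hle, c', hc'⟩ := hD.exists_map_le_and_diffIso he i a
  have hiso : DiffIso g (W i' c) (W i'' c') :=
    ((hc.symm ((hD.stab i a₀).map e.toLinearMap he)).trans
      ((hD.iso i a₀ a).map_equiv he)).trans hc'
  obtain rfl : i' = i'' := by_contra fun hne => hD.not_iso i' i'' hne c c' hiso
  exact hle

theorem exists_map_eq (he : ∀ x, e (g x) = g (e x)) (hne : ∀ i, Nonempty (κ i)) :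
    ∃ s : ι → ι, ∀ i, (Q i).map e.toLinearMap = Q (s i) := by
  have he' : ∀ x, e.symm (g x) = g (e.symm x) := fun x =>
    e.injective (by rw [he, LinearEquiv.apply_symm_apply, LinearEquiv.apply_symm_apply])
  choose s hs using fun i => hD.exists_map_le he (hne i).some
  choose t ht using fun i => hD.exists_map_le he' (hne i).some
  exact ⟨s, map_eq_of_map_le_of_map_symm_le e hD.indep (fun i => hD.ne_bot (hne i).some)
    hs ht⟩

theorem finrank_eq_of_map_eq (he : ∀ x, e (g x) = g (e x)) {s : ι → ι}
    (hs : ∀ i, (Q i).map e.toLinearMap = Q (s i)) (i : ι) (a : κ i) (b : κ (s i)) :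
    finrank F (W (s i) b) = finrank F (W i a) := by
  obtain ⟨i', hle, c, hc⟩ := hD.exists_map_le_and_diffIso he i a
  obtain rfl : i' = s i := hD.indep.eq_of_le_of_le ((hD.irred i a).map_equiv he).1 hle
    (hs i ▸ Submodule.map_mono (hD.component_le i a))
  rw [(hD.iso (s i) b c).finrank_eq, ← hc.finrank_eq, Submodule.finrank_map_semilinearEquiv]

theorem card_eq_of_map_eq [FiniteDimensional F V] (he : ∀ x, e (g x) = g (e x)) {s : ι → ι}
    (hs : ∀ i, (Q i).map e.toLinearMap = Q (s i)) (i : ι) (a : κ i) (b : κ (s i)) :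
    Fintype.card (κ (s i)) = Fintype.card (κ i) := by
  have hpos : 0 < finrank F (W i a) :=
    Nat.pos_of_ne_zero fun h => (hD.irred i a).1 (Submodule.finrank_eq_zero.mp h)
  refine Nat.eq_of_mul_eq_mul_right hpos ?_
  calc Fintype.card (κ (s i)) * finrank F (W i a)
      = Fintype.card (κ (s i)) * finrank F (W (s i) b) := by
        rw [hD.finrank_eq_of_map_eq he hs i a b]
    _ = finrank F ((Q i).map e.toLinearMap) := by rw [hs, hD.finrank_eq_card_mul (s i) b]
    _ = Fintype.card (κ i) * finrank F (W i a) := by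
        rw [Submodule.finrank_map_semilinearEquiv, hD.finrank_eq_card_mul i a]

end IsIsotypicDecomposition

end Isotypic

theorem clifford_difference_general {F V : Type*} [Field F]
    [AddCommGroup V] [Module F V] [FiniteDimensional F V]
    (ψ : F ≃+* F) (A : V ≃+ V)
    (hA : ∀ (f : F) (v : V), A (f • v) = ψ f • A v)
    (hirr : ∀ p : Submodule F V, DiffStab ⇑A p → p = ⊥ ∨ p = ⊤)
    (k : ℕ)
    (r : ℕ) (Q : Fin r → Submodule F V)
    (hQind : iSupIndep Q) (hQtop : iSup Q = ⊤)
    (n : Fin r → ℕ) (hn : ∀ j, 0 < n j)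
    (W : (j : Fin r) → Fin (n j) → Submodule F V)
    (hWstab : ∀ j a, DiffStab ((⇑A)^[k]) (W j a))
    (hWirr : ∀ j a, DiffIrred ((⇑A)^[k]) (W j a))
    (hWind : ∀ j, iSupIndep (W j))
    (hWsup : ∀ j, iSup (W j) = Q j)
    (hWiso : ∀ j a b, DiffIso ((⇑A)^[k]) (W j a) (W j b))
    (hcross : ∀ j j', j ≠ j' → ∀ a b, ¬ DiffIso ((⇑A)^[k]) (W j a) (W j' b)) :
    (∀ j, ∃ j', ⇑A '' (Q j : Set V) = (Q j' : Set V)) ∧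
    (∀ j j', ∃ m : ℕ, (⇑A)^[m] '' (Q j : Set V) = (Q j' : Set V)) ∧
    (∀ j j', n j = n j') ∧
    (∀ j j' a b, Module.finrank F (W j a) = Module.finrank F (W j' b)) := by
  let g : V →+ V := .mk' (⇑A)^[k] (iterate_map_add A k)
  have hD : IsIsotypicDecomposition g Q W :=
    ⟨hQind, hQtop, hWind, hWsup, hWstab, hWirr, hWiso, hcross⟩
  have := RingHomInvPair.of_ringEquiv ψ
  have := RingHomInvPair.of_ringEquiv_symm ψ
  let e : V ≃ₛₗ[(ψ : F →+* F)] V := { A with map_smul' := hA }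
  have he : ∀ x, e (g x) = g (e x) := (Commute.self_iterate (⇑A) k).eq
  let a₀ : ∀ j, Fin (n j) := fun j => ⟨0, hn j⟩
  obtain ⟨s, hs⟩ := hD.exists_map_eq he fun j => ⟨a₀ j⟩
  have hn_inv : ∀ j, n (s j) = n j := fun j => by
    simpa using hD.card_eq_of_map_eq he hs j (a₀ j) (a₀ (s j))
  have hd_inv : ∀ j, finrank F (W (s j) (a₀ (s j))) = finrank F (W j (a₀ j)) :=
    fun j => hD.finrank_eq_of_map_eq he hs j _ _
  have horbit := exists_iterate_eq_of_irreducible e hirr hQind (fun j => hD.ne_bot (a₀ j)) hs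
  refine ⟨fun j => ⟨s j, image_iterate_eq_of_map_eq e hs 1 j⟩, fun j j' => ?_, fun j j' => ?_,
    fun j j' a b => ?_⟩ <;> obtain ⟨m, rfl⟩ := horbit j j'
  · exact ⟨m, image_iterate_eq_of_map_eq e hs m j⟩
  · exact (congrFun (iterate_invariant (funext hn_inv) m) j).symm
  · rw [(hWiso _ a (a₀ j)).finrank_eq, (hWiso _ b (a₀ _)).finrank_eq]
    exact (congrFun (iterate_invariant (f := s) (g := fun j => finrank F (W j (a₀ j)))
      (funext hd_inv) m) j).symm

/-- Clifford-type theorem for difference modules.  Let `(V, A)` be an irreducible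
finite-dimensional `D_s`-module (`ψ = φ^s`, `A` = `ψ`-semilinear action of `Φ^s`),
`s ∣ t`, `k = t/s`, so the restriction to `D_t` is `(V, A^k)`.  Suppose
`V = M₁^{n₁} ⊕ ⋯ ⊕ M_r^{n_r}` is the isotypic decomposition of the restriction:
`Q j` is the sum of an independent family of `n j` mutually isomorphic irreducible
`D_t`-submodules `W j a`, and submodules from different components are
non-isomorphic.  Then multiplication by `Φ^s` (i.e. `A`) permutes the isotypic
components `Q j` transitively; consequently `n₁ = ⋯ = n_r` and
`dim_F M₁ = ⋯ = dim_F M_r`. -/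
theorem clifford_difference {F V : Type*} [Field F]
    [AddCommGroup V] [Module F V] [FiniteDimensional F V]
    (ψ : F ≃+* F) (A : V ≃+ V)
    (hA : ∀ (f : F) (v : V), A (f • v) = ψ f • A v)
    (hnt : Nontrivial V)
    (hirr : ∀ p : Submodule F V, DiffStab ⇑A p → p = ⊥ ∨ p = ⊤)
    (k : ℕ) (hk : 0 < k)
    (r : ℕ) (hr : 0 < r) (Q : Fin r → Submodule F V)
    (hQind : iSupIndep Q) (hQtop : iSup Q = ⊤)
    (hQstab : ∀ j, DiffStab ((⇑A)^[k]) (Q j))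
    (n : Fin r → ℕ) (hn : ∀ j, 0 < n j)
    (W : (j : Fin r) → Fin (n j) → Submodule F V)
    (hWle : ∀ j a, W j a ≤ Q j)
    (hWstab : ∀ j a, DiffStab ((⇑A)^[k]) (W j a))
    (hWirr : ∀ j a, DiffIrred ((⇑A)^[k]) (W j a))
    (hWind : ∀ j, iSupIndep (W j))
    (hWsup : ∀ j, iSup (W j) = Q j)
    (hWiso : ∀ j a b, DiffIso ((⇑A)^[k]) (W j a) (W j b))
    (hcross : ∀ j j', j ≠ j' → ∀ a b, ¬ DiffIso ((⇑A)^[k]) (W j a) (W j' b)) :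
    (∀ j, ∃ j', ⇑A '' (Q j : Set V) = (Q j' : Set V)) ∧
    (∀ j j', ∃ m : ℕ, (⇑A)^[m] '' (Q j : Set V) = (Q j' : Set V)) ∧
    (∀ j j', n j = n j') ∧
    (∀ j j' a b, Module.finrank F (W j a) = Module.finrank F (W j' b)) :=
  clifford_difference_general ψ A hA hirr k r Q hQind hQtop n hn W hWstab hWirr hWind hWsup hWiso
    hcross
end

section
/- (Mackey irreducibility criterion for difference modules) Let C = {f ∈ F : φ(f) = f} be algebraically closed of characteristic 0, and let N be an irreducible D_t-module, finite-dimensional over F. Then the induced D-module N↑^1_t = D ⊗_{D_t} N is irreducible if and only if for each i = 1, ..., t−1 the twisted module Φ^i ⊗ N is not isomorphic to N as a D_t-module. -/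
/-- The fixed field `C = {f ∈ F : φ(f) = f}` of a field automorphism `φ`. -/
def fixedSubfield {F : Type*} [Field F] (φ : F ≃+* F) : Subfield F where
  carrier := {f | φ f = f}
  mul_mem' := by intro a b ha hb; simp only [Set.mem_setOf_eq] at *; rw [map_mul, ha, hb]
  one_mem' := by simp [Set.mem_setOf_eq]
  add_mem' := by intro a b ha hb; simp only [Set.mem_setOf_eq] at *; rw [map_add, ha, hb]
  zero_mem' := by simp [Set.mem_setOf_eq]
  neg_mem' := by intro a ha; simp only [Set.mem_setOf_eq] at *; rw [map_neg, ha]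
  inv_mem' := by intro a ha; simp only [Set.mem_setOf_eq] at *; rw [map_inv₀, ha]

/-- `(V, A)` realizes the induced module `D ⊗_{D_t} (W, Ψ)` (`k = t`). -/
def IsInducedTw {F W V : Type*} [Field F] [AddCommGroup W] [Module F W]
    [AddCommGroup V] [Module F V]
    (τ : F → F) (A : V → V) (k : ℕ) (Ψ : W → W) : Prop :=
  ∃ j : W →+ V,
    (∀ (f : F) (w : W), j (f • w) = τ f • j w) ∧
    (∀ w : W, A^[k] (j w) = j (Ψ w)) ∧
    (∀ v : V, ∃! c : Fin k → W, v = ∑ i : Fin k, A^[(i : ℕ)] (j (c i)))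

/-!
If `e : N ≅ Φ^i ⊗ N` with `0 < i < t`, Frobenius reciprocity turns `w ↦ Φ^i ⊗ e⁻¹ w` into a
`D`-endomorphism `B` of `N↑^1_t`. Conjugation by `Φ` fixes `B`, so its minimal polynomial has
coefficients in `C` and hence an eigenvalue there; by irreducibility `B` would be a scalar, which
is absurd since `B` moves `1 ⊗ N` into the component `Φ^i ⊗ N`.

Conversely, inside a nonzero `D`-submodule `P` pick `S` minimal among nonzero `Φ^t`-stable
subspaces. By minimality every nonzero coordinate projection of `S` is injective on `S`, and by
irreducibility of `N` it is onto. Two nonzero coordinates `l < k` would therefore give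
`N ≅ Φ^(k-l) ⊗ N`, so there is only one, `k`; then `Φ^k ⊗ N ⊆ P`, and `P = N↑^1_t`.
-/

section Iterate

variable {F V : Type*} [Field F] [AddCommGroup V] [Module F V]

theorem iterate_map_smul_of_map_smul {g : V → V} {σ : F → F}
    (hg : ∀ (f : F) (v : V), g (f • v) = σ f • g v) (n : ℕ) (f : F) (v : V) :
    g^[n] (f • v) = σ^[n] f • g^[n] v := by
  induction n with
  | zero => rfl
  | succ n ih => simp only [Function.iterate_succ_apply', ih, hg]

theorem iterate_map_sum {ι M G : Type*} [AddCommMonoid M] [FunLike G M M]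
    [AddMonoidHomClass G M M] (f : G) (n : ℕ) (s : Finset ι) (g : ι → M) :
    f^[n] (∑ i ∈ s, g i) = ∑ i ∈ s, f^[n] (g i) :=
  map_sum ({ toFun := f^[n], map_zero' := iterate_map_zero f n, map_add' := iterate_map_add f n }
    : M →+ M) g s

theorem DiffStab.iterate {g : V → V} {p : Submodule F V} (h : DiffStab g p) (n : ℕ) :
    DiffStab g^[n] p :=
  Set.MapsTo.iterate h n

end Iterate

section Schur

open Polynomial

variable {F V : Type*} [Field F] [AddCommGroup V] [Module F V]
variable {φ : F ≃+* F} {A : V ≃+ V}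

theorem aeval_apply_map_of_commute (hA : ∀ (f : F) (v : V), A (f • v) = φ f • A v)
    {B : Module.End F V} (hBA : Function.Commute B A) (p : F[X]) (v : V) :
    A (aeval B p v) = aeval B (p.map (φ : F →+* F)) (A v) := by
  induction p using Polynomial.induction_on' with
  | add p q hp hq => simp only [map_add, Polynomial.map_add, LinearMap.add_apply, hp, hq]
  | monomial n c =>
    simp only [aeval_monomial, map_monomial, Module.End.mul_apply, Module.algebraMap_end_apply,
      Module.End.pow_apply, hA, (hBA.iterate_left n).eq]
    rfl

theorem minpoly_map_eq_of_commute [FiniteDimensional F V]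
    (hA : ∀ (f : F) (v : V), A (f • v) = φ f • A v)
    {B : Module.End F V} (hBA : Function.Commute B A) :
    (minpoly F B).map (φ : F →+* F) = minpoly F B := by
  have hmonic := minpoly.monic (Algebra.IsIntegral.isIntegral (R := F) B)
  have hroot : aeval B ((minpoly F B).map (φ : F →+* F)) = 0 := by
    ext v
    obtain ⟨u, rfl⟩ := A.surjective v
    rw [← aeval_apply_map_of_commute hA hBA, minpoly.aeval, LinearMap.zero_apply, map_zero,
      LinearMap.zero_apply]
  exact eq_of_monic_of_dvd_of_natDegree_le hmonic (hmonic.map _) (minpoly.dvd F B hroot)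
    (natDegree_map _).le

theorem exists_fixed_hasEigenvalue_of_commute [FiniteDimensional F V] [Nontrivial V]
    [IsAlgClosed (fixedSubfield φ)] (hA : ∀ (f : F) (v : V), A (f • v) = φ f • A v)
    {B : Module.End F V} (hBA : Function.Commute B A) :
    ∃ μ : F, φ μ = μ ∧ B.HasEigenvalue μ := by
  have hmap := minpoly_map_eq_of_commute hA hBA
  have hlifts : minpoly F B ∈ lifts (fixedSubfield φ).subtype :=
    (lifts_iff_coeff_lifts _).2 fun n =>
      ⟨⟨(minpoly F B).coeff n, show φ _ = _ by
        simpa only [coeff_map, RingEquiv.coe_toRingHom] using congrArg (coeff · n) hmap⟩, rfl⟩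
  have hB := Algebra.IsIntegral.isIntegral (R := F) B
  obtain ⟨q, hq, hdeg, -⟩ := lifts_and_degree_eq_and_monic hlifts (minpoly.monic hB)
  obtain ⟨z, hz⟩ := IsAlgClosed.exists_root q <| by
    rw [hdeg, degree_eq_natDegree (minpoly.ne_zero hB)]
    exact_mod_cast (minpoly.natDegree_pos hB).ne'
  refine ⟨z, z.2, Module.End.hasEigenvalue_of_isRoot ?_⟩
  rw [← hq]
  exact hz.map

theorem exists_eq_smul_of_commute [FiniteDimensional F V] [Nontrivial V]
    [IsAlgClosed (fixedSubfield φ)] (hA : ∀ (f : F) (v : V), A (f • v) = φ f • A v)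
    (hirr : ∀ p : Submodule F V, DiffStab ⇑A p → p = ⊥ ∨ p = ⊤)
    {B : Module.End F V} (hBA : Function.Commute B A) :
    ∃ μ : F, ∀ v, B v = μ • v := by
  obtain ⟨μ, hμ, hB⟩ := exists_fixed_hasEigenvalue_of_commute hA hBA
  have hstab : DiffStab ⇑A (B.eigenspace μ) := fun v hv => by
    rw [Module.End.mem_eigenspace_iff] at hv ⊢
    rw [hBA.eq, hv, hA, hμ]
  refine ⟨μ, fun v => Module.End.mem_eigenspace_iff.1 ?_⟩
  rw [(hirr _ hstab).resolve_left hB]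
  exact Submodule.mem_top

end Schur

section Induced

variable {F W V : Type*} [Field F] [AddCommGroup W] [Module F W] [AddCommGroup V] [Module F V]

/-- `V = ⊕_{k < t} A^k (j W)`: the data of `IsInducedTw`, with `j w = 1 ⊗ w` and `coord` the
components. -/
structure InducedDecomposition (F : Type*) [Field F] [Module F W] [Module F V]
    (A : V ≃+ V) (t : ℕ) (Ψ : W ≃+ W) where
  j : W →ₗ[F] V
  iterate_j : ∀ w, A^[t] (j w) = j (Ψ w)
  coord : V ≃+ (Fin t → W)
  coord_symm_apply : ∀ c, coord.symm c = ∑ k : Fin t, A^[k] (j (c k))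

/-- `e` is an isomorphism of `D_t`-modules `N ≅ Φ^i ⊗ N`. -/
def IsTwistIso (φ : F ≃+* F) (Ψ : W ≃+ W) (i : ℕ) (e : W ≃+ W) : Prop :=
  (∀ (f : F) (w : W), e (f • w) = (⇑φ)^[i] f • e w) ∧ ∀ w, e (Ψ w) = Ψ (e w)

variable {A : V ≃+ V} {t : ℕ} {Ψ : W ≃+ W}

theorem IsInducedTw.nonempty_inducedDecomposition (h : IsInducedTw (id : F → F) ⇑A t ⇑Ψ) :
    Nonempty (InducedDecomposition F A t Ψ) := by
  obtain ⟨j, hj, hjΨ, hdec⟩ := h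
  let sum : (Fin t → W) →+ V :=
    { toFun := fun c => ∑ k : Fin t, A^[k] (j (c k))
      map_zero' := by simp only [Pi.zero_apply, map_zero, iterate_map_zero, Finset.sum_const_zero]
      map_add' := fun c c' => by
        simp only [Pi.add_apply, map_add, iterate_map_add, Finset.sum_add_distrib] }
  have hsum : Function.Bijective sum :=
    ⟨fun c _ h => (hdec (sum c)).unique rfl h, fun v => (hdec v).exists.imp fun _ h => h.symm⟩
  exact ⟨⟨{ toFun := j, map_add' := j.map_add, map_smul' := hj }, hjΨ,
    (AddEquiv.ofBijective sum hsum).symm, fun _ => rfl⟩⟩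

namespace InducedDecomposition

section

variable (I : InducedDecomposition F A t Ψ)

theorem coord_iterate_j (k : Fin t) (w : W) : I.coord (A^[k] (I.j w)) = Pi.single k w := by
  rw [← I.coord.eq_symm_apply, I.coord_symm_apply]
  simp only [Pi.single_apply, apply_ite, map_zero, iterate_map_zero, Finset.sum_ite_eq',
    Finset.mem_univ, if_true]

theorem coord_j (ht : 0 < t) (w : W) : I.coord (I.j w) = Pi.single ⟨0, ht⟩ w :=
  I.coord_iterate_j ⟨0, ht⟩ w

theorem j_injective (ht : 0 < t) : Function.Injective I.j := fun w w' h =>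
  Pi.single_injective _ <| by simpa only [I.coord_j ht] using congrArg I.coord h

variable {φ : F ≃+* F}

theorem coord_smul (hA : ∀ (f : F) (v : V), A (f • v) = φ f • A v) (f : F) (v : V)
    (k : Fin t) : I.coord (f • v) k = (⇑φ.symm)^[k] f • I.coord v k := by
  suffices I.coord (f • v) = fun k : Fin t => (⇑φ.symm)^[k] f • I.coord v k from congrFun this k
  rw [← I.coord.eq_symm_apply, I.coord_symm_apply]
  conv_lhs => rw [← I.coord.symm_apply_apply v, I.coord_symm_apply, Finset.smul_sum]
  refine Finset.sum_congr rfl fun m _ => ?_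
  rw [map_smul, iterate_map_smul_of_map_smul hA,
    (Function.LeftInverse.iterate φ.apply_symm_apply m) f]

theorem coord_iterate_smul (hA : ∀ (f : F) (v : V), A (f • v) = φ f • A v) (f : F) (v : V)
    (k : Fin t) : I.coord ((⇑φ)^[k] f • v) k = f • I.coord v k := by
  rw [I.coord_smul hA, (Function.LeftInverse.iterate φ.symm_apply_apply k) f]

theorem coord_iterate_t (v : V) (k : Fin t) : I.coord (A^[t] v) k = Ψ (I.coord v k) := by
  suffices I.coord (A^[t] v) = fun k : Fin t => Ψ (I.coord v k) from congrFun this k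
  rw [← I.coord.eq_symm_apply, I.coord_symm_apply]
  conv_lhs => rw [← I.coord.symm_apply_apply v, I.coord_symm_apply, iterate_map_sum]
  refine Finset.sum_congr rfl fun m _ => ?_
  rw [← Function.iterate_add_apply, add_comm, Function.iterate_add_apply, I.iterate_j]

theorem iterate_mul_j (q : ℕ) (w : W) : A^[t * q] (I.j w) = I.j (Ψ^[q] w) := by
  rw [Function.iterate_mul]
  exact (Function.Semiconj.iterate_right (fun w => (I.iterate_j w).symm) q w).symm

/-- Frobenius reciprocity: the endomorphism of `N↑^1_t` induced by a `D_t`-map `β : N → N↑^1_t`. -/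
def extend (hA : ∀ (f : F) (v : V), A (f • v) = φ f • A v) (β : W →ₗ[F] V) :
    Module.End F V where
  toFun v := ∑ k : Fin t, A^[k] (β (I.coord v k))
  map_add' v v' := by
    simp only [map_add, Pi.add_apply, iterate_map_add, Finset.sum_add_distrib]
  map_smul' f v := by
    simp only [I.coord_smul hA, map_smul, iterate_map_smul_of_map_smul hA, Finset.smul_sum,
      Function.LeftInverse.iterate φ.apply_symm_apply _ _, RingHom.id_apply]

theorem extend_iterate_j (hA : ∀ (f : F) (v : V), A (f • v) = φ f • A v) (ht : 0 < t)
    {β : W →ₗ[F] V} (hβ : ∀ w, β (Ψ w) = A^[t] (β w)) (m : ℕ) (w : W) :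
    I.extend hA β (A^[m] (I.j w)) = A^[m] (β w) := by
  have hsplit : A^[m] (I.j w) = A^[(⟨m % t, Nat.mod_lt m ht⟩ : Fin t)] (I.j (Ψ^[m / t] w)) := by
    rw [← I.iterate_mul_j, ← Function.iterate_add_apply, Nat.mod_add_div]
  have hβq : β (Ψ^[m / t] w) = A^[t * (m / t)] (β w) := by
    rw [Function.iterate_mul]
    exact Function.Semiconj.iterate_right hβ _ w
  rw [hsplit, extend, LinearMap.coe_mk, AddHom.coe_mk, I.coord_iterate_j]
  simp only [Pi.single_apply, apply_ite, hβq, map_zero, ← Function.iterate_add_apply,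
    iterate_map_zero, Finset.sum_ite_eq', Finset.mem_univ, if_true, Nat.mod_add_div]

theorem extend_commute (hA : ∀ (f : F) (v : V), A (f • v) = φ f • A v) (ht : 0 < t)
    {β : W →ₗ[F] V} (hβ : ∀ w, β (Ψ w) = A^[t] (β w)) : Function.Commute (I.extend hA β) A := by
  intro v
  obtain ⟨c, rfl⟩ := I.coord.symm.surjective v
  simp only [I.coord_symm_apply, map_sum, ← Function.iterate_succ_apply' (⇑A),
    I.extend_iterate_j hA ht hβ]

theorem eq_top_of_forall_j_mem {p : Submodule F V} (hp : DiffStab A p) (hj : ∀ w, I.j w ∈ p) :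
    p = ⊤ := by
  refine eq_top_iff.2 fun v _ => ?_
  obtain ⟨c, rfl⟩ := I.coord.symm.surjective v
  rw [I.coord_symm_apply]
  exact p.sum_mem fun k _ => hp.iterate k _ (hj _)

variable (hA : ∀ (f : F) (v : V), A (f • v) = φ f • A v)

def coordImage (S : Submodule F V) (k : Fin t) : Submodule F W where
  carrier := {w | ∃ v ∈ S, I.coord v k = w}
  add_mem' := by
    rintro _ _ ⟨v, hv, rfl⟩ ⟨v', hv', rfl⟩
    exact ⟨v + v', S.add_mem hv hv', by rw [map_add, Pi.add_apply]⟩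
  zero_mem' := ⟨0, S.zero_mem, by rw [map_zero, Pi.zero_apply]⟩
  smul_mem' := by
    rintro f _ ⟨v, hv, rfl⟩
    exact ⟨(⇑φ)^[k] f • v, S.smul_mem _ hv, I.coord_iterate_smul hA f v k⟩

theorem mem_coordImage {S : Submodule F V} {k : Fin t} {w : W} :
    w ∈ I.coordImage hA S k ↔ ∃ v ∈ S, I.coord v k = w :=
  Iff.rfl

def coordKer (k : Fin t) : Submodule F V where
  carrier := {v | I.coord v k = 0}
  add_mem' {v v'} (hv : I.coord v k = 0) (hv' : I.coord v' k = 0) := by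
    change I.coord (v + v') k = 0
    rw [map_add, Pi.add_apply, hv, hv', add_zero]
  zero_mem' := by
    change I.coord 0 k = 0
    rw [map_zero, Pi.zero_apply]
  smul_mem' f v (hv : I.coord v k = 0) := by
    change I.coord (f • v) k = 0
    rw [I.coord_smul hA, hv, smul_zero]

theorem diffStab_coordImage {S : Submodule F V} (hS : DiffStab A^[t] S) (k : Fin t) :
    DiffStab Ψ (I.coordImage hA S k) := by
  rintro _ ⟨v, hv, rfl⟩
  exact ⟨A^[t] v, hS v hv, I.coord_iterate_t v k⟩

theorem diffStab_coordKer (k : Fin t) : DiffStab A^[t] (I.coordKer hA k) := fun v hv => by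
  change I.coord (A^[t] v) k = 0
  rw [I.coord_iterate_t, show I.coord v k = 0 from hv, map_zero]

theorem injOn_coord_of_minimal {S : Submodule F V}
    (hS : Minimal (fun S : Submodule F V => S ≠ ⊥ ∧ DiffStab A^[t] S) S) {k : Fin t}
    (hk : I.coordImage hA S k ≠ ⊥) : Set.InjOn (fun v => I.coord v k) S := by
  have hker : S ⊓ I.coordKer hA k = ⊥ := by
    by_contra hne
    have hle : S ≤ S ⊓ I.coordKer hA k :=
      hS.2 ⟨hne, fun x hx => ⟨hS.1.2 x hx.1, I.diffStab_coordKer hA k x hx.2⟩⟩ inf_le_left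
    refine hk (eq_bot_iff.2 ?_)
    rintro _ ⟨v, hv, rfl⟩
    exact (Submodule.mem_bot F).2 (hle hv).2
  intro v hv v' hv' h
  rw [← sub_eq_zero, ← Submodule.mem_bot F, ← hker]
  refine ⟨S.sub_mem hv hv', ?_⟩
  change I.coord (v - v') k = 0
  rw [map_sub, Pi.sub_apply, sub_eq_zero]
  exact h

theorem exists_addEquiv_coord_eq {S : Submodule F V} {k l : Fin t}
    (hk : Set.InjOn (fun v => I.coord v k) S) (hl : Set.InjOn (fun v => I.coord v l) S)
    (hSk : I.coordImage hA S k = ⊤) (hSl : I.coordImage hA S l = ⊤) :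
    ∃ e : W ≃+ W, ∀ v ∈ S, e (I.coord v k) = I.coord v l := by
  let π : Fin t → S →+ W := fun m =>
    { toFun v := I.coord v m
      map_zero' := by simp only [Submodule.coe_zero, map_zero, Pi.zero_apply]
      map_add' v v' := by simp only [Submodule.coe_add, map_add, Pi.add_apply] }
  have hπ : ∀ m, Set.InjOn (fun v => I.coord v m) S → I.coordImage hA S m = ⊤ →
      Function.Bijective (π m) := fun m hinj htop =>
    ⟨fun v v' h => Subtype.ext (hinj v.2 v'.2 h), fun w => by
      obtain ⟨v, hv, rfl⟩ := (I.mem_coordImage hA).1 (htop ▸ Submodule.mem_top : w ∈ _)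
      exact ⟨⟨v, hv⟩, rfl⟩⟩
  refine ⟨(AddEquiv.ofBijective (π k) (hπ k hk hSk)).symm.trans
    (AddEquiv.ofBijective (π l) (hπ l hl hSl)), fun v hv => ?_⟩
  change π l ((AddEquiv.ofBijective (π k) _).symm (π k ⟨v, hv⟩)) = _
  rw [← AddEquiv.ofBijective_apply (π k) (hπ k hk hSk), AddEquiv.symm_apply_apply]
  rfl

theorem isTwistIso_of_coord_eq {S : Submodule F V} (hS : DiffStab A^[t] S) {k l : Fin t}
    (hlk : l ≤ k) (hSk : I.coordImage hA S k = ⊤) {e : W ≃+ W}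
    (he : ∀ v ∈ S, e (I.coord v k) = I.coord v l) :
    IsTwistIso φ Ψ (k - l) e := by
  have hsurj : ∀ w, ∃ v ∈ S, I.coord v k = w := fun w =>
    (I.mem_coordImage hA).1 (hSk ▸ Submodule.mem_top)
  refine ⟨fun f w => ?_, fun w => ?_⟩ <;> obtain ⟨v, hv, rfl⟩ := hsurj w
  · have hφ : (⇑φ.symm)^[l] ((⇑φ)^[k] f) = (⇑φ)^[k - l] f := by
      obtain ⟨d, hd⟩ := Nat.exists_eq_add_of_le (Fin.le_def.1 hlk)
      rw [hd, Nat.add_sub_cancel_left, Function.iterate_add_apply,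
        Function.LeftInverse.iterate φ.symm_apply_apply]
    rw [← I.coord_iterate_smul hA f v k, he _ (S.smul_mem _ hv), he v hv, I.coord_smul hA, hφ]
  · rw [← I.coord_iterate_t, he _ (hS v hv), he v hv, I.coord_iterate_t]

theorem eq_top_of_single_coordImage {p S : Submodule F V} (hp : DiffStab A p) (hSp : S ≤ p)
    {k : Fin t} (hSk : I.coordImage hA S k = ⊤) (hS0 : ∀ m ≠ k, I.coordImage hA S m = ⊥) :
    p = ⊤ := by
  have hjk : ∀ w, A^[k] (I.j w) ∈ p := fun w => by
    obtain ⟨v, hv, hvk⟩ := (I.mem_coordImage hA).1 (hSk ▸ Submodule.mem_top : w ∈ _)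
    suffices v = A^[k] (I.j w) from this ▸ hSp hv
    refine I.coord.injective (funext fun m => ?_)
    rw [I.coord_iterate_j]
    rcases eq_or_ne m k with rfl | hmk
    · rw [Pi.single_eq_same, hvk]
    · rw [Pi.single_eq_of_ne hmk, ← Submodule.mem_bot F, ← hS0 m hmk]
      exact ⟨v, hv, rfl⟩
  refine I.eq_top_of_forall_j_mem hp fun w => ?_
  have hw : A^[t - k] (A^[k] (I.j (Ψ.symm w))) = I.j w := by
    rw [← Function.iterate_add_apply, Nat.sub_add_cancel k.isLt.le, I.iterate_j,
      Ψ.apply_symm_apply]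
  exact hw ▸ hp.iterate _ _ (hjk _)

end

variable {φ : F ≃+* F}

theorem not_exists_isTwistIso_of_irreducible (I : InducedDecomposition F A t Ψ)
    [FiniteDimensional F V] [Nontrivial V] [Nontrivial W] [IsAlgClosed (fixedSubfield φ)]
    (hA : ∀ (f : F) (v : V), A (f • v) = φ f • A v)
    (hirr : ∀ p : Submodule F V, DiffStab ⇑A p → p = ⊥ ∨ p = ⊤) {i : ℕ} (hi : 1 ≤ i)
    (hit : i < t) :
    ¬ ∃ e : W ≃+ W, IsTwistIso φ Ψ i e := by
  rintro ⟨e, he, heΨ⟩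
  have ht : 0 < t := by omega
  have he_symm : ∀ (f : F) (w : W), e.symm (f • w) = (⇑φ.symm)^[i] f • e.symm w := fun f w =>
    e.injective <| by
      rw [e.apply_symm_apply, he, Function.LeftInverse.iterate φ.apply_symm_apply,
        e.apply_symm_apply]
  have heΨ_symm : ∀ w, e.symm (Ψ w) = Ψ (e.symm w) := fun w =>
    e.injective <| by rw [e.apply_symm_apply, heΨ, e.apply_symm_apply]
  let β : W →ₗ[F] V :=
    { toFun w := A^[i] (I.j (e.symm w))
      map_add' w w' := by simp only [map_add, iterate_map_add]
      map_smul' f w := by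
        simp only [he_symm, map_smul, iterate_map_smul_of_map_smul hA, RingHom.id_apply,
          Function.LeftInverse.iterate φ.apply_symm_apply _ _] }
  have hβ : ∀ w, β (Ψ w) = A^[t] (β w) := fun w => by
    simp only [β, LinearMap.coe_mk, AddHom.coe_mk, heΨ_symm, ← I.iterate_j,
      ← Function.iterate_add_apply, add_comm]
  obtain ⟨μ, hμ⟩ := exists_eq_smul_of_commute hA hirr (I.extend_commute hA ht hβ)
  obtain ⟨w, hw⟩ := exists_ne (0 : W)
  have hcoord := congrArg (fun v => I.coord v ⟨i, hit⟩) (hμ (I.j w))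
  have hBj : I.extend hA β (I.j w) = A^[(⟨i, hit⟩ : Fin t)] (I.j (e.symm w)) :=
    I.extend_iterate_j hA ht hβ 0 w
  have hi0 : (⟨i, hit⟩ : Fin t) ≠ ⟨0, ht⟩ := by simp only [ne_eq, Fin.mk.injEq]; omega
  rw [hBj, I.coord_iterate_j, I.coord_smul hA, I.coord_j ht, Pi.single_eq_same,
    Pi.single_eq_of_ne hi0, smul_zero] at hcoord
  exact hw (e.symm.map_eq_zero_iff.1 hcoord)

theorem irreducible_of_forall_not_exists_isTwistIso (I : InducedDecomposition F A t Ψ)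
    [FiniteDimensional F V] (hA : ∀ (f : F) (v : V), A (f • v) = φ f • A v)
    (hirrW : ∀ q : Submodule F W, DiffStab ⇑Ψ q → q = ⊥ ∨ q = ⊤)
    (htwist : ∀ i : ℕ, 1 ≤ i → i < t → ¬ ∃ e : W ≃+ W, IsTwistIso φ Ψ i e)
    (p : Submodule F V) (hp : DiffStab A p) : p = ⊥ ∨ p = ⊤ := by
  refine or_iff_not_imp_left.2 fun hp0 => ?_
  obtain ⟨S, hSp, hS⟩ := exists_minimal_le_of_wellFoundedLT
    (fun S : Submodule F V => S ≠ ⊥ ∧ DiffStab A^[t] S) p ⟨hp0, hp.iterate t⟩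
  have htop : ∀ k, I.coordImage hA S k ≠ ⊥ → I.coordImage hA S k = ⊤ := fun k hk =>
    (hirrW _ (I.diffStab_coordImage hA hS.1.2 k)).resolve_left hk
  obtain ⟨k, hk⟩ : ∃ k, I.coordImage hA S k ≠ ⊥ := by
    obtain ⟨v, hv, hv0⟩ := Submodule.exists_mem_ne_zero_of_ne_bot hS.1.1
    obtain ⟨k, hk⟩ := Function.ne_iff.1 ((map_ne_zero_iff _ I.coord.injective).2 hv0)
    refine ⟨k, fun hbot => hk ?_⟩
    rw [Pi.zero_apply, ← Submodule.mem_bot F, ← hbot]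
    exact ⟨v, hv, rfl⟩
  by_cases hsingle : ∀ m ≠ k, I.coordImage hA S m = ⊥
  · exact I.eq_top_of_single_coordImage hA hp hSp (htop k hk) hsingle
  push Not at hsingle
  obtain ⟨m, hmk, hm⟩ := hsingle
  obtain ⟨l, k, hlk, hl, hk⟩ : ∃ l k : Fin t, l < k ∧
      I.coordImage hA S l ≠ ⊥ ∧ I.coordImage hA S k ≠ ⊥ := by
    rcases hmk.lt_or_gt with h | h
    exacts [⟨m, k, h, hm, hk⟩, ⟨k, m, h, hk, hm⟩]
  obtain ⟨e, he⟩ := I.exists_addEquiv_coord_eq hA (I.injOn_coord_of_minimal hA hS hk)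
    (I.injOn_coord_of_minimal hA hS hl) (htop k hk) (htop l hl)
  have hlk' : (l : ℕ) < k := hlk
  exact absurd ⟨e, I.isTwistIso_of_coord_eq hA hS.1.2 hlk.le (htop k hk) he⟩
    (htwist _ (by omega) (by omega))

end InducedDecomposition

end Induced

theorem mackey_irreducibility_criterion_general {F W V : Type*} [Field F]
    (φ : F ≃+* F) [IsAlgClosed (fixedSubfield φ)]
    [AddCommGroup W] [Module F W]
    [AddCommGroup V] [Module F V] [FiniteDimensional F V]
    (t : ℕ) (ht : 0 < t)
    (Ψ : W ≃+ W)
    (hntW : Nontrivial W)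
    (hirrW : ∀ p : Submodule F W, DiffStab ⇑Ψ p → p = ⊥ ∨ p = ⊤)
    (A : V ≃+ V) (hA : ∀ (f : F) (v : V), A (f • v) = φ f • A v)
    (hInd : IsInducedTw (id : F → F) ⇑A t ⇑Ψ) :
    (Nontrivial V ∧ ∀ p : Submodule F V, DiffStab ⇑A p → p = ⊥ ∨ p = ⊤) ↔
      ∀ i : ℕ, 1 ≤ i → i < t →
        ¬ ∃ e : W ≃+ W,
            (∀ (f : F) (w : W), e (f • w) = (⇑φ)^[i] f • e w) ∧
            (∀ w : W, e (Ψ w) = Ψ (e w)) := by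
  obtain ⟨I⟩ := hInd.nonempty_inducedDecomposition
  refine ⟨fun ⟨_, hirrV⟩ _ hi hit => I.not_exists_isTwistIso_of_irreducible hA hirrV hi hit,
    fun htwist => ⟨(I.j_injective ht).nontrivial, ?_⟩⟩
  exact I.irreducible_of_forall_not_exists_isTwistIso hA hirrW htwist

/-- Mackey irreducibility criterion for difference modules.  Let the fixed field
`C` of `φ` be algebraically closed of characteristic `0`, and let `N = (W, Ψ)` be
an irreducible `D_t`-module, finite-dimensional over `F`.  Let `(V, A)` be the
induced `D`-module `N↑^1_t = D ⊗_{D_t} N`.  Then `N↑^1_t` is irreducible if and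
only if for each `i = 1, …, t-1` the twisted module `Φ^i ⊗ N` is not isomorphic to
`N` as a `D_t`-module, i.e. there is no additive bijection `e : W ≃ W` which is
`φ^i`-semilinear and commutes with `Ψ`. -/
theorem mackey_irreducibility_criterion {F W V : Type*} [Field F] [CharZero F]
    (φ : F ≃+* F) [IsAlgClosed (fixedSubfield φ)]
    [AddCommGroup W] [Module F W] [FiniteDimensional F W]
    [AddCommGroup V] [Module F V] [FiniteDimensional F V]
    (t : ℕ) (ht : 0 < t)
    (Ψ : W ≃+ W) (hΨ : ∀ (f : F) (w : W), Ψ (f • w) = (⇑φ)^[t] f • Ψ w)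
    (hntW : Nontrivial W)
    (hirrW : ∀ p : Submodule F W, DiffStab ⇑Ψ p → p = ⊥ ∨ p = ⊤)
    (A : V ≃+ V) (hA : ∀ (f : F) (v : V), A (f • v) = φ f • A v)
    (hInd : IsInducedTw (id : F → F) ⇑A t ⇑Ψ) :
    (Nontrivial V ∧ ∀ p : Submodule F V, DiffStab ⇑A p → p = ⊥ ∨ p = ⊤) ↔
      ∀ i : ℕ, 1 ≤ i → i < t →
        ¬ ∃ e : W ≃+ W,
            (∀ (f : F) (w : W), e (f • w) = (⇑φ)^[i] f • e w) ∧
            (∀ w : W, e (Ψ w) = Ψ (e w)) :=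
  mackey_irreducibility_criterion_general φ t ht Ψ hntW hirrW A hA hInd
end

section
/- (Mackey formula for difference modules) Let s, t ≥ 1 with d = gcd(s,t) and l = lcm(s,t). For any D_s-module N, there is a D_t-module isomorphism N↑^1_s ↓^1_t ≅ ⨁_{i=0}^{d−1} (Φ^i ⊗ N)↓^s_l ↑^t_l. In particular, as (D_t, D_s)-bimodules, D ≅ ⨁_{i=0}^{d−1} D_t ⊗_{D_l} (Φ^i · D_s). -/
section Aux

/-- iterate of an additive equiv is additive -/
lemma mackey_iter_add {V : Type*} [AddCommGroup V] (A : V ≃+ V) (n : ℕ) (a b : V) :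
    (⇑A)^[n] (a + b) = (⇑A)^[n] a + (⇑A)^[n] b := by
  induction n with
  | zero => simp
  | succ n ih => simp [Function.iterate_succ_apply', ih]

lemma mackey_iter_smul {F V : Type*} [Field F] [AddCommGroup V] [Module F V]
    (φ : F ≃+* F) (A : V ≃+ V) (hA : ∀ (f : F) (v : V), A (f • v) = φ f • A v)
    (n : ℕ) (f : F) (v : V) : (⇑A)^[n] (f • v) = (⇑φ)^[n] f • (⇑A)^[n] v := by
  induction n with
  | zero => simp
  | succ n ih => simp [Function.iterate_succ_apply', ih, hA]

lemma mackey_iter_mul {W V : Type*} (A : V → V) (Ψ : W → W) (j : W → V) (s : ℕ)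
    (hj : ∀ w, A^[s] (j w) = j (Ψ w)) (q : ℕ) : ∀ w : W,
    A^[s * q] (j w) = j (Ψ^[q] w) := by
  induction q with
  | zero => simp
  | succ q ih =>
    intro w
    rw [Nat.mul_succ, Function.iterate_add_apply, hj, ih (Ψ w),
      ← Function.iterate_succ_apply, Function.iterate_succ_apply']

lemma mackey_iter_decomp {W V : Type*} (A : V → V) (Ψ : W → W) (j : W → V) (s : ℕ)
    (hj : ∀ w, A^[s] (j w) = j (Ψ w)) (n : ℕ) (w : W) :
    A^[n] (j w) = A^[n % s] (j (Ψ^[n / s] w)) := by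
  conv_lhs => rw [← Nat.mod_add_div n s, Function.iterate_add_apply,
    mackey_iter_mul A Ψ j s hj]

lemma mackey_k_eq (s t : ℕ) (hs : 0 < s) (ht : 0 < t) :
    Nat.lcm s t / t = s / Nat.gcd s t := by
  have hdpos : 0 < Nat.gcd s t := Nat.gcd_pos_of_pos_left t hs
  have h1 : Nat.lcm s t = (s / Nat.gcd s t) * t := by
    refine Nat.eq_of_mul_eq_mul_right hdpos ?_
    rw [mul_comm (Nat.lcm s t), Nat.gcd_mul_lcm, mul_right_comm,
      Nat.div_mul_cancel (Nat.gcd_dvd_left s t)]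
  rw [h1, Nat.mul_div_cancel _ ht]

lemma mackey_card (s t : ℕ) (hs : 0 < s) (ht : 0 < t) :
    Nat.gcd s t * (Nat.lcm s t / t) = s := by
  rw [mackey_k_eq s t hs ht]
  exact Nat.mul_div_cancel' (Nat.gcd_dvd_left s t)

lemma mackey_bij (s t : ℕ) (hs : 0 < s) (ht : 0 < t) :
    Function.Bijective (fun p : Fin (Nat.gcd s t) × Fin (Nat.lcm s t / t) =>
      (⟨(t * (p.2 : ℕ) + (p.1 : ℕ)) % s, Nat.mod_lt _ hs⟩ : Fin s)) := by
  rw [Fintype.bijective_iff_injective_and_card]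
  constructor
  · rintro ⟨i, m⟩ ⟨i', m'⟩ h
    simp only [Fin.mk.injEq] at h
    have h' : t * (m : ℕ) + (i : ℕ) ≡ t * (m' : ℕ) + (i' : ℕ) [MOD s] := h
    have hd_s : Nat.gcd s t ∣ s := Nat.gcd_dvd_left s t
    have hd_t : Nat.gcd s t ∣ t := Nat.gcd_dvd_right s t
    -- first components are equal
    have h1 : (i : ℕ) ≡ (i' : ℕ) [MOD Nat.gcd s t] := by
      have hz : ∀ m'' : ℕ, t * m'' ≡ 0 [MOD Nat.gcd s t] :=
        fun m'' => (Nat.modEq_zero_iff_dvd).mpr (hd_t.mul_right m'')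
      calc (i : ℕ) = 0 + (i : ℕ) := (zero_add _).symm
        _ ≡ t * (m : ℕ) + (i : ℕ) [MOD Nat.gcd s t] := ((hz m).symm.add_right _)
        _ ≡ t * (m' : ℕ) + (i' : ℕ) [MOD Nat.gcd s t] := h'.of_dvd hd_s
        _ ≡ 0 + (i' : ℕ) [MOD Nat.gcd s t] := ((hz m').add_right _)
        _ = (i' : ℕ) := zero_add _
    have hi : i = i' := by
      have h1' := h1
      unfold Nat.ModEq at h1'
      rw [Nat.mod_eq_of_lt i.isLt, Nat.mod_eq_of_lt i'.isLt] at h1'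
      exact Fin.ext h1'
    subst hi
    -- second components are equal
    have h2 : t * (m : ℕ) ≡ t * (m' : ℕ) [MOD s] := Nat.ModEq.add_right_cancel' _ h'
    have h3 : (m : ℕ) ≡ (m' : ℕ) [MOD s / Nat.gcd s t] :=
      h2.cancel_left_div_gcd hs
    rw [← mackey_k_eq s t hs ht] at h3
    have hm : m = m' := by
      unfold Nat.ModEq at h3
      rw [Nat.mod_eq_of_lt m.isLt, Nat.mod_eq_of_lt m'.isLt] at h3
      exact Fin.ext h3
    rw [hm]
  · simp [mackey_card s t hs ht]

end Aux

/-- Mackey's formula for difference modules.  Let `s, t ≥ 1`, `d = gcd(s,t)`,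
`l = lcm(s,t)`.  Let `N = (W, Ψ)` be a `D_s`-module and let `(V, A)` realize the
induced `D`-module `N↑^1_s`.  Then as a `D_t`-module (with action `A^t`), `V`
decomposes as `⊕_{i=0}^{d-1} (Φ^i ⊗ N)↓^s_l ↑^t_l`: there are `φ^i`-semilinear
embeddings `jᵢ : W → V` on which `(A^t)^{l/t} = A^l` acts as `Ψ^{l/s}` (the
`D_l`-action on `(Φ^i ⊗ N)↓^s_l`), and every `v ∈ V` is uniquely
`∑_{i<d} ∑_{m<l/t} (A^t)^m (jᵢ wᵢₘ)`. -/
theorem mackey_formula {F W V : Type*} [Field F]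
    [AddCommGroup W] [Module F W] [FiniteDimensional F W]
    [AddCommGroup V] [Module F V]
    (φ : F ≃+* F) (s t : ℕ) (hs : 0 < s) (ht : 0 < t)
    (Ψ : W ≃+ W) (hΨ : ∀ (f : F) (w : W), Ψ (f • w) = (⇑φ)^[s] f • Ψ w)
    (A : V ≃+ V) (hA : ∀ (f : F) (v : V), A (f • v) = φ f • A v)
    (hInd : IsInducedTw (id : F → F) ⇑A s ⇑Ψ) :
    ∃ j : Fin (Nat.gcd s t) → (W →+ V),
      (∀ (i : Fin (Nat.gcd s t)) (f : F) (w : W),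
        j i (f • w) = (⇑φ)^[(i : ℕ)] f • j i w) ∧
      (∀ (i : Fin (Nat.gcd s t)) (w : W),
        (⇑A)^[Nat.lcm s t] (j i w) = j i ((⇑Ψ)^[Nat.lcm s t / s] w)) ∧
      (∀ v : V, ∃! c : Fin (Nat.gcd s t) → Fin (Nat.lcm s t / t) → W,
        v = ∑ i : Fin (Nat.gcd s t), ∑ m : Fin (Nat.lcm s t / t),
              (⇑A)^[t * (m : ℕ)] (j i (c i m))) := by
  obtain ⟨j₀, hj₀s, hj₀Ψ, hj₀u⟩ := hInd
  have hsl : s * (Nat.lcm s t / s) = Nat.lcm s t :=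
    Nat.mul_div_cancel' (Nat.dvd_lcm_left s t)
  set E : Fin (Nat.gcd s t) × Fin (Nat.lcm s t / t) ≃ Fin s :=
    Equiv.ofBijective _ (mackey_bij s t hs ht) with hE
  have hEapp : ∀ p : Fin (Nat.gcd s t) × Fin (Nat.lcm s t / t),
      ((E p : Fin s) : ℕ) = (t * (p.2 : ℕ) + (p.1 : ℕ)) % s := fun p => rfl
  set Q : Fin (Nat.gcd s t) × Fin (Nat.lcm s t / t) → ℕ :=
    fun p => (t * (p.2 : ℕ) + (p.1 : ℕ)) / s with hQ
  refine ⟨fun i => AddMonoidHom.mk' (fun w => (⇑A)^[(i : ℕ)] (j₀ w))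
    (fun a b => by
      show (⇑A)^[(i : ℕ)] (j₀ (a + b)) = _
      rw [map_add, mackey_iter_add]), ?_, ?_, ?_⟩
  · intro i f w
    show (⇑A)^[(i : ℕ)] (j₀ (f • w)) = (⇑φ)^[(i : ℕ)] f • (⇑A)^[(i : ℕ)] (j₀ w)
    rw [hj₀s f w, id_eq]
    exact mackey_iter_smul φ A hA (i : ℕ) f (j₀ w)
  · intro i w
    show (⇑A)^[Nat.lcm s t] ((⇑A)^[(i : ℕ)] (j₀ w)) =
      (⇑A)^[(i : ℕ)] (j₀ ((⇑Ψ)^[Nat.lcm s t / s] w))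
    have hAl : ∀ w : W, (⇑A)^[Nat.lcm s t] (j₀ w) = j₀ ((⇑Ψ)^[Nat.lcm s t / s] w) := by
      intro w
      conv_lhs => rw [← hsl]
      exact mackey_iter_mul (⇑A) (⇑Ψ) (⇑j₀) s hj₀Ψ _ w
    rw [← Function.iterate_add_apply, add_comm, Function.iterate_add_apply, hAl]
  · intro v
    -- key sum computation
    set G : (Fin (Nat.gcd s t) → Fin (Nat.lcm s t / t) → W) → Fin s → V :=
      fun c n => (⇑A)^[(n : ℕ)]
        (j₀ ((⇑Ψ)^[Q (E.symm n)] (c (E.symm n).1 (E.symm n).2))) with hG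
    have key : ∀ c : Fin (Nat.gcd s t) → Fin (Nat.lcm s t / t) → W,
        (∑ i : Fin (Nat.gcd s t), ∑ m : Fin (Nat.lcm s t / t),
          (⇑A)^[t * (m : ℕ)] ((⇑A)^[(i : ℕ)] (j₀ (c i m)))) =
        ∑ n : Fin s, G c n := by
      intro c
      have step1 : ∀ p : Fin (Nat.gcd s t) × Fin (Nat.lcm s t / t),
          (⇑A)^[t * (p.2 : ℕ)] ((⇑A)^[(p.1 : ℕ)] (j₀ (c p.1 p.2))) = G c (E p) := by
        intro p
        rw [hG]
        simp only [Equiv.symm_apply_apply]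
        rw [hEapp p, ← Function.iterate_add_apply,
          mackey_iter_decomp (⇑A) (⇑Ψ) (⇑j₀) s hj₀Ψ (t * (p.2 : ℕ) + (p.1 : ℕ))]
      calc (∑ i : Fin (Nat.gcd s t), ∑ m : Fin (Nat.lcm s t / t),
              (⇑A)^[t * (m : ℕ)] ((⇑A)^[(i : ℕ)] (j₀ (c i m))))
          = ∑ i : Fin (Nat.gcd s t), ∑ m : Fin (Nat.lcm s t / t), G c (E (i, m)) :=
            Finset.sum_congr rfl fun i _ => Finset.sum_congr rfl fun m _ => step1 (i, m)
        _ = ∑ p : Fin (Nat.gcd s t) × Fin (Nat.lcm s t / t), G c (E p) :=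
            (Fintype.sum_prod_type (fun p => G c (E p))).symm
        _ = ∑ n : Fin s, G c n := E.sum_comp (G c)
    have hcancel1 : ∀ (q : ℕ) (w : W), (⇑Ψ)^[q] ((⇑Ψ.symm)^[q] w) = w := by
      intro q
      exact Function.LeftInverse.iterate (fun w => Ψ.apply_symm_apply w) q
    have hcancel2 : ∀ (q : ℕ) (w : W), (⇑Ψ.symm)^[q] ((⇑Ψ)^[q] w) = w := by
      intro q
      exact Function.LeftInverse.iterate (fun w => Ψ.symm_apply_apply w) q
    obtain ⟨b, hb, hbu⟩ := hj₀u v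
    refine ⟨fun i m => (⇑Ψ.symm)^[Q (i, m)] (b (E (i, m))), ?_, ?_⟩
    · show v = ∑ i : Fin (Nat.gcd s t), ∑ m : Fin (Nat.lcm s t / t),
        (⇑A)^[t * (m : ℕ)] ((⇑A)^[(i : ℕ)]
          (j₀ ((⇑Ψ.symm)^[Q (i, m)] (b (E (i, m))))))
      rw [key, hb]
      refine Finset.sum_congr rfl fun n _ => ?_
      show (⇑A)^[(n : ℕ)] (j₀ (b n)) = (⇑A)^[(n : ℕ)]
        (j₀ ((⇑Ψ)^[Q (E.symm n)] ((⇑Ψ.symm)^[Q ((E.symm n).1, (E.symm n).2)]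
          (b (E ((E.symm n).1, (E.symm n).2))))))
      rw [show ((E.symm n).1, (E.symm n).2) = E.symm n from rfl, hcancel1,
        E.apply_symm_apply]
    · intro c' hc'
      have hc'' : v = ∑ i : Fin (Nat.gcd s t), ∑ m : Fin (Nat.lcm s t / t),
          (⇑A)^[t * (m : ℕ)] ((⇑A)^[(i : ℕ)] (j₀ (c' i m))) := hc'
      rw [key c'] at hc''
      have hb' : (fun n : Fin s =>
          (⇑Ψ)^[Q (E.symm n)] (c' (E.symm n).1 (E.symm n).2)) = b := hbu _ hc''
      funext i m
      have h2 := congrFun hb' (E (i, m))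
      simp only [Equiv.symm_apply_apply] at h2
      rw [← h2, hcancel2]
end

section
/- Let F be a field of characteristic ≠ 2 with automorphism φ, and M a 3-dimensional irreducible module over the skew Laurent ring D = F[Φ, Φ⁻¹]. If q is a nonzero element of the symmetric square S²(M) spanning a 1-dimensional D-submodule (i.e. Φ(q) = r·q for some r ∈ F*), then the symmetric bilinear form on M* associated to q is nondegenerate. -/
/-- The dual action of `Φ` on `M* = Hom_F(M, F)`: `Φ(ℓ) = φ ∘ ℓ ∘ Φ⁻¹`. -/
noncomputable def dualAct {F V : Type*} [Field F] [AddCommGroup V] [Module F V]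
    (φ : F ≃+* F) (A : V ≃+ V)
    (hA : ∀ (f : F) (v : V), A (f • v) = φ f • A v)
    (x : Module.Dual F V) : Module.Dual F V where
  toFun v := φ (x (A.symm v))
  map_add' u v := by simp [map_add]
  map_smul' f v := by
    have h : A.symm (f • v) = φ.symm f • A.symm v := by
      apply A.injective
      rw [hA, A.apply_symm_apply, RingEquiv.apply_symm_apply, A.apply_symm_apply]
    simp [h, map_smul, smul_eq_mul, map_mul]

/-- Let `M = (V, A)` be a `3`-dimensional irreducible difference module over
`D = F[Φ, Φ⁻¹]`, with `char F ≠ 2`.  Suppose `q ∈ S²(M)` is nonzero and spans a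
`1`-dimensional `D`-submodule, i.e. `Φ(q) = r·q` for some `r ∈ F*`; in terms of the
associated symmetric bilinear form `B` on `M*` this says
`φ(B(x,y)) = r · B(Φ(x), Φ(y))` for all `x, y ∈ M*` (with `Φ` the dual action).
Then `B` is nondegenerate. -/
theorem symmetric_square_eigenvector_nondegenerate
    {F V : Type*} [Field F] (h2 : (2 : F) ≠ 0)
    [AddCommGroup V] [Module F V] [FiniteDimensional F V]
    (hdim : Module.finrank F V = 3)
    (φ : F ≃+* F) (A : V ≃+ V)
    (hA : ∀ (f : F) (v : V), A (f • v) = φ f • A v)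
    (hnt : Nontrivial V)
    (hirr : ∀ p : Submodule F V, DiffStab ⇑A p → p = ⊥ ∨ p = ⊤)
    (B : Module.Dual F V →ₗ[F] Module.Dual F V →ₗ[F] F)
    (hsymm : ∀ x y, B x y = B y x)
    (hBne : B ≠ 0)
    (r : F) (hr : r ≠ 0)
    (heig : ∀ x y : Module.Dual F V,
      φ (B x y) = r * B (dualAct φ A hA x) (dualAct φ A hA y)) :
    ∀ x : Module.Dual F V, (∀ y, B x y = 0) → x = 0 := by
  classical
  set Q : Submodule F (Module.Dual F V) := LinearMap.ker B with hQ
  have hmemQ : ∀ x : Module.Dual F V, x ∈ Q ↔ ∀ y, B x y = 0 := by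
    intro x
    rw [hQ, LinearMap.mem_ker]
    constructor
    · intro h y; rw [h]; rfl
    · intro h; ext y; exact h y
  -- inverse of dualAct
  have hinv : ∀ x : Module.Dual F V, ∃ x' : Module.Dual F V,
      dualAct φ A hA x' = x ∧ ∀ v, x' v = φ.symm (x (A v)) := by
    intro x
    refine ⟨{ toFun := fun v => φ.symm (x (A v)),
              map_add' := by intro u v; simp [map_add],
              map_smul' := by
                intro f v
                simp [hA, map_smul, smul_eq_mul, map_mul] }, ?_, fun v => rfl⟩
    ext v
    simp [dualAct]
  -- Q is stable under the "inverse" direction: preimages of elements of Q lie in Q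
  have hQinv : ∀ x ∈ Q, ∀ x', dualAct φ A hA x' = x → x' ∈ Q := by
    intro x hx x' hx'
    rw [hmemQ]
    intro y
    have := heig x' y
    rw [hx'] at this
    have h0 : B x (dualAct φ A hA y) = 0 := (hmemQ x).1 hx _
    rw [h0, mul_zero] at this
    have := φ.injective (by rw [this, map_zero] : φ (B x' y) = φ 0)
    exact this
  -- the coannihilator W is A-stable
  set W : Submodule F V := Q.dualCoannihilator with hW
  have hWstab : DiffStab ⇑A W := by
    intro v hv
    rw [hW, Submodule.mem_dualCoannihilator] at hv ⊢
    intro x hx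
    obtain ⟨x', hx'eq, hx'val⟩ := hinv x
    have hx'Q : x' ∈ Q := hQinv x hx x' hx'eq
    have h0 : φ.symm (x (A v)) = 0 := by rw [← hx'val v]; exact hv x' hx'Q
    have := congrArg φ h0
    rwa [φ.apply_symm_apply, map_zero] at this
  rcases hirr W hWstab with hbot | htop
  · -- W = ⊥ implies Q = ⊤, contradicting hBne
    exfalso
    have hfr := Subspace.finrank_add_finrank_dualCoannihilator_eq Q
    rw [← hW, hbot, finrank_bot, add_zero] at hfr
    have hQtop : Q = ⊤ := by
      apply Submodule.eq_top_of_finrank_eq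
      rw [hfr, Subspace.dual_finrank_eq]
    apply hBne
    ext x y
    have : x ∈ Q := hQtop ▸ Submodule.mem_top
    simp [(hmemQ x).1 this y]
  · -- W = ⊤ implies Q = ⊥
    intro x hx
    have hxQ : x ∈ Q := (hmemQ x).2 hx
    ext v
    have hvW : v ∈ W := htop ▸ Submodule.mem_top
    rw [hW, Submodule.mem_dualCoannihilator] at hvW
    simpa using hvW x hxQ
end

section
/- Let G = (g_{ij}) ∈ GL₃(F) satisfy g_{21}² = g_{11}g_{31} and g_{23}² = g_{13}g_{33}, along with 2g_{21}g_{22} = g_{11}g_{32} + g_{31}g_{12}, 2g_{22}g_{23} = g_{12}g_{33} + g_{32}g_{13}, and (g_{22}² − g_{12}g_{32}) + (2g_{21}g_{23} − g_{11}g_{33} − g_{31}g_{13}) = 0. Then G is diagonal, or skew-diagonal (nonzero entries only at positions (1,3), (2,2), (3,1)), or at least one of the products g_{11}g_{21}, g_{21}g_{31}, g_{13}g_{23}, g_{23}g_{33} is nonzero. -/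
/-- Let `G = (g_{ij}) ∈ GL₃(F)` (`F` of characteristic 0) satisfy the five
relations coming from `Φ(x₂² - x₁x₃) = r(x₂² - x₁x₃)`.  Then `G` is diagonal, or
skew-diagonal (nonzero entries only at positions `(1,3)`, `(2,2)`, `(3,1)`), or at
least one of the products `g₁₁g₂₁`, `g₂₁g₃₁`, `g₁₃g₂₃`, `g₂₃g₃₃` is nonzero.
(Indices are shifted by one: `g_{ij}` is `g (i-1) (j-1)`.) -/
theorem matrix_form_trichotomy {F : Type*} [Field F] [CharZero F]
    (g : Matrix (Fin 3) (Fin 3) F)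
    (hdet : IsUnit g.det)
    (h1 : g 1 0 ^ 2 = g 0 0 * g 2 0)
    (h2 : g 1 2 ^ 2 = g 0 2 * g 2 2)
    (h3 : 2 * g 1 0 * g 1 1 = g 0 0 * g 2 1 + g 2 0 * g 0 1)
    (h4 : 2 * g 1 1 * g 1 2 = g 0 1 * g 2 2 + g 2 1 * g 0 2)
    (h5 : (g 1 1 ^ 2 - g 0 1 * g 2 1) +
          (2 * g 1 0 * g 1 2 - g 0 0 * g 2 2 - g 2 0 * g 0 2) = 0) :
    (∀ i j : Fin 3, i ≠ j → g i j = 0) ∨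
    (∀ i j : Fin 3, (i : ℕ) + (j : ℕ) ≠ 2 → g i j = 0) ∨
    g 0 0 * g 1 0 ≠ 0 ∨ g 1 0 * g 2 0 ≠ 0 ∨
    g 0 2 * g 1 2 ≠ 0 ∨ g 1 2 * g 2 2 ≠ 0 := by
  by_cases ha : g 0 0 * g 1 0 = 0
  · by_cases hb : g 1 0 * g 2 0 = 0
    · by_cases hc : g 0 2 * g 1 2 = 0
      · by_cases hd : g 1 2 * g 2 2 = 0
        · -- all four products vanish
          have hdet' : g.det ≠ 0 := hdet.ne_zero
          have h10 : g 1 0 = 0 := by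
            have h3' : g 1 0 ^ 3 = 0 := by
              have : g 1 0 ^ 3 = g 0 0 * g 1 0 * g 2 0 := by linear_combination g 1 0 * h1
              rw [this, ha, zero_mul]
            exact pow_eq_zero_iff (n := 3) (by norm_num) |>.mp h3'
          have h12 : g 1 2 = 0 := by
            have h3' : g 1 2 ^ 3 = 0 := by
              have : g 1 2 ^ 3 = g 0 2 * g 1 2 * g 2 2 := by linear_combination g 1 2 * h2
              rw [this, hc, zero_mul]
            exact pow_eq_zero_iff (n := 3) (by norm_num) |>.mp h3'
          have e1 : g 0 0 * g 2 0 = 0 := by rw [← h1, h10]; ring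
          have e2 : g 0 2 * g 2 2 = 0 := by rw [← h2, h12]; ring
          have e3 : g 0 0 * g 2 1 + g 2 0 * g 0 1 = 0 := by rw [← h3, h10]; ring
          have e4 : g 0 1 * g 2 2 + g 2 1 * g 0 2 = 0 := by rw [← h4, h12]; ring
          have hdf : g 1 1 * (g 0 0 * g 2 2 - g 0 2 * g 2 0) ≠ 0 := by
            rw [Matrix.det_fin_three] at hdet'
            intro h; apply hdet'
            rw [h10, h12]; linear_combination h
          have h11 : g 1 1 ≠ 0 := fun h => hdf (by rw [h]; ring)
          have hmin : g 0 0 * g 2 2 - g 0 2 * g 2 0 ≠ 0 := fun h => hdf (by rw [h]; ring)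
          by_cases h00 : g 0 0 = 0
          · -- skew-diagonal case
            have h20 : g 2 0 ≠ 0 := by
              intro h; exact hmin (by rw [h00, h]; ring)
            have h02 : g 0 2 ≠ 0 := by
              intro h; exact hmin (by rw [h00, h]; ring)
            have h22 : g 2 2 = 0 := by
              rcases mul_eq_zero.mp e2 with h | h
              · exact absurd h h02
              · exact h
            have h01 : g 0 1 = 0 := by
              have : g 2 0 * g 0 1 = 0 := by rw [h00] at e3; linear_combination e3
              rcases mul_eq_zero.mp this with h | h
              · exact absurd h h20
              · exact h
            have h21 : g 2 1 = 0 := by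
              have : g 2 1 * g 0 2 = 0 := by rw [h22] at e4; linear_combination e4
              rcases mul_eq_zero.mp this with h | h
              · exact h
              · exact absurd h h02
            right; left
            intro i j hij
            fin_cases i <;> fin_cases j <;> simp_all
          · -- diagonal case
            have h20 : g 2 0 = 0 := by
              rcases mul_eq_zero.mp e1 with h | h
              · exact absurd h h00
              · exact h
            have h22 : g 2 2 ≠ 0 := by
              intro h; exact hmin (by rw [h20, h]; ring)
            have h02 : g 0 2 = 0 := by
              rcases mul_eq_zero.mp e2 with h | h
              · exact h
              · exact absurd h h22
            have h21 : g 2 1 = 0 := by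
              have : g 0 0 * g 2 1 = 0 := by rw [h20] at e3; linear_combination e3
              rcases mul_eq_zero.mp this with h | h
              · exact absurd h h00
              · exact h
            have h01 : g 0 1 = 0 := by
              have : g 0 1 * g 2 2 = 0 := by rw [h21] at e4; linear_combination e4
              rcases mul_eq_zero.mp this with h | h
              · exact h
              · exact absurd h h22
            left
            intro i j hij
            fin_cases i <;> fin_cases j <;> simp_all
        · tauto
      · tauto
    · tauto
  · tauto
end
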